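/- arXiv:2310.12602 — 5 statements merged into one kernel-verified Lean document; each statement's English description precedes it below -/
import Mathlib

section
/- Fix reals x > 0 and Λ > 0, and define f(λ) = x⁴ + x³·(√(x² − 4λ) − 2λ) + 2λ(Λ − λ) for λ ∈ (0, x²/4]. Then f is twice differentiable on (0, x²/4) with second derivative f''(λ) = −4x³/((x² − 4λ)^{3/2}) − 4 < 0, f(λ) → 2x⁴ as λ → 0⁺, and the equation f(λ) = 0 has at most one solution λ ∈ (0, x²/4]. -/
/-!
Since `f'' < 0` on `(0, x²/4)`, `f` is strictly concave on `(0, x²/4]`. As `f` is positive near `0`,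
it vanishes at most once there: a zero `p` to the left of another zero `q` would lie strictly
between `q` and a point where `f` is positive, so concavity would force `f p > 0`.
-/

open Set Filter Topology

theorem StrictConcaveOn.pos_of_lt_of_nonneg {a b c p q : ℝ} {f : ℝ → ℝ}
    (hf : StrictConcaveOn ℝ (Ioc a b) f) (hc : 0 < c) (hlim : Tendsto f (𝓝[>] a) (𝓝 c))
    (hp : p ∈ Ioc a b) (hq : q ∈ Ioc a b) (hpq : p < q) (hfq : 0 ≤ f q) : 0 < f p := by
  obtain ⟨t, hft, hta, htp⟩ :=
    ((hlim.eventually_const_lt hc).and (Ioo_mem_nhdsGT hp.1)).exists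
  have htq : t < q := htp.trans hpq
  have hp_mem : p ∈ openSegment ℝ t q := by rw [openSegment_eq_Ioo htq]; exact ⟨htp, hpq⟩
  calc 0 ≤ min (f t) (f q) := le_min hft.le hfq
    _ < f p := hf.lt_on_openSegment ⟨hta, htp.le.trans hp.2⟩ hq htq.ne hp_mem

theorem StrictConcaveOn.setOf_eq_zero_subsingleton {a b c : ℝ} {f : ℝ → ℝ}
    (hf : StrictConcaveOn ℝ (Ioc a b) f) (hc : 0 < c) (hlim : Tendsto f (𝓝[>] a) (𝓝 c)) :
    {l | l ∈ Ioc a b ∧ f l = 0}.Subsingleton := by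
  intro p ⟨hp, hfp⟩ q ⟨hq, hfq⟩
  by_contra hne
  rcases lt_or_gt_of_ne hne with hpq | hqp
  · exact (hf.pos_of_lt_of_nonneg hc hlim hp hq hpq hfq.ge).ne' hfp
  · exact (hf.pos_of_lt_of_nonneg hc hlim hq hp hqp hfp.ge).ne' hfq

theorem hasDerivAt_sqrt_sub_four_mul {c l : ℝ} (hl : 4 * l < c) :
    HasDerivAt (fun l => √(c - 4 * l)) (-2 / √(c - 4 * l)) l := by
  refine (((hasDerivAt_id' l).const_mul 4).const_sub c |>.sqrt ?_).congr_deriv ?_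
  · linarith
  · field_simp
    norm_num

theorem hasDerivAt_inv_sqrt_sub_four_mul {c l : ℝ} (hl : 4 * l < c) :
    HasDerivAt (fun l => (√(c - 4 * l))⁻¹) (2 / √((c - 4 * l) ^ 3)) l := by
  have hpos : 0 < c - 4 * l := by linarith
  have hs : 0 < √(c - 4 * l) := Real.sqrt_pos.2 hpos
  have hcube : √((c - 4 * l) ^ 3) = √(c - 4 * l) ^ 3 := by
    rw [← Real.sqrt_sq (pow_nonneg hs.le 3), ← pow_mul, pow_mul', Real.sq_sqrt hpos.le]
  refine ((hasDerivAt_sqrt_sub_four_mul hl).inv hs.ne').congr_deriv ?_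
  rw [hcube]
  field_simp

section

variable {x Λ l : ℝ}

theorem hasDerivAt_objective (hl : 4 * l < x ^ 2) :
    HasDerivAt (fun l => x ^ 4 + x ^ 3 * (√(x ^ 2 - 4 * l) - 2 * l) + 2 * l * (Λ - l))
      (-(2 * x ^ 3) / √(x ^ 2 - 4 * l) - 2 * x ^ 3 + 2 * Λ - 4 * l) l := by
  refine (((hasDerivAt_sqrt_sub_four_mul hl).sub ((hasDerivAt_id' l).const_mul 2)).const_mul
    (x ^ 3) |>.const_add (x ^ 4) |>.add
      (((hasDerivAt_id' l).const_mul 2).mul ((hasDerivAt_id' l).const_sub Λ))).congr_deriv ?_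
  field_simp
  ring

theorem hasDerivAt_objective_deriv (hl : 4 * l < x ^ 2) :
    HasDerivAt (fun l => -(2 * x ^ 3) / √(x ^ 2 - 4 * l) - 2 * x ^ 3 + 2 * Λ - 4 * l)
      (-(4 * x ^ 3) / √((x ^ 2 - 4 * l) ^ 3) - 4) l := by
  simp only [div_eq_mul_inv]
  refine (((hasDerivAt_inv_sqrt_sub_four_mul hl).const_mul (-(2 * x ^ 3))).sub_const _
    |>.add_const _ |>.sub ((hasDerivAt_id' l).const_mul 4)).congr_deriv ?_
  ring

theorem hasDerivAt_deriv_objective (hl : 4 * l < x ^ 2) :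
    HasDerivAt (deriv fun l => x ^ 4 + x ^ 3 * (√(x ^ 2 - 4 * l) - 2 * l) + 2 * l * (Λ - l))
      (-(4 * x ^ 3) / √((x ^ 2 - 4 * l) ^ 3) - 4) l := by
  refine (hasDerivAt_objective_deriv (Λ := Λ) hl).congr_of_eventuallyEq ?_
  filter_upwards [((continuous_const_mul 4).tendsto l).eventually_lt_const hl]
    with m hm using (hasDerivAt_objective hm).deriv

theorem neg_div_sqrt_cube_sub_four_neg (hx : 0 < x) (hl : 4 * l < x ^ 2) :
    -(4 * x ^ 3) / √((x ^ 2 - 4 * l) ^ 3) - 4 < 0 := by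
  have hs : 0 < √((x ^ 2 - 4 * l) ^ 3) := Real.sqrt_pos.2 (pow_pos (by linarith) 3)
  have : -(4 * x ^ 3) / √((x ^ 2 - 4 * l) ^ 3) < 0 :=
    div_neg_of_neg_of_pos (by linarith [pow_pos hx 3]) hs
  linarith

theorem continuous_objective :
    Continuous fun l => x ^ 4 + x ^ 3 * (√(x ^ 2 - 4 * l) - 2 * l) + 2 * l * (Λ - l) := by
  fun_prop

theorem tendsto_objective_nhdsGT_zero (hx : 0 < x) :
    Tendsto (fun l => x ^ 4 + x ^ 3 * (√(x ^ 2 - 4 * l) - 2 * l) + 2 * l * (Λ - l))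
      (𝓝[>] 0) (𝓝 (2 * x ^ 4)) := by
  have hf0 : x ^ 4 + x ^ 3 * (√(x ^ 2 - 4 * 0) - 2 * 0) + 2 * 0 * (Λ - 0) = 2 * x ^ 4 := by
    rw [mul_zero, sub_zero, Real.sqrt_sq hx.le]
    ring
  exact hf0 ▸ continuous_objective.continuousWithinAt.tendsto

theorem strictConcaveOn_objective (hx : 0 < x) :
    StrictConcaveOn ℝ (Ioc 0 (x ^ 2 / 4))
      (fun l => x ^ 4 + x ^ 3 * (√(x ^ 2 - 4 * l) - 2 * l) + 2 * l * (Λ - l)) := by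
  refine strictConcaveOn_of_deriv2_neg (convex_Ioc _ _) continuous_objective.continuousOn ?_
  intro l hl
  rw [interior_Ioc] at hl
  have hl' : 4 * l < x ^ 2 := by linarith [hl.2]
  rw [Function.iterate_succ_apply, Function.iterate_one, (hasDerivAt_deriv_objective hl').deriv]
  exact neg_div_sqrt_cube_sub_four_neg hx hl'

end

theorem stmt4_general (x Λ : ℝ) (hx : 0 < x) :
    let f : ℝ → ℝ := fun l => x ^ 4 + x ^ 3 * (Real.sqrt (x ^ 2 - 4 * l) - 2 * l)
      + 2 * l * (Λ - l)
    (∀ l ∈ Set.Ioo 0 (x ^ 2 / 4),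
        DifferentiableAt ℝ f l ∧
        HasDerivAt (deriv f) (-(4 * x ^ 3) / Real.sqrt ((x ^ 2 - 4 * l) ^ 3) - 4) l ∧
        -(4 * x ^ 3) / Real.sqrt ((x ^ 2 - 4 * l) ^ 3) - 4 < 0) ∧
      Filter.Tendsto f (nhdsWithin 0 (Set.Ioi 0)) (nhds (2 * x ^ 4)) ∧
      {l : ℝ | l ∈ Set.Ioc 0 (x ^ 2 / 4) ∧ f l = 0}.Subsingleton := by
  intro f
  have hbound : ∀ l ∈ Ioo 0 (x ^ 2 / 4), 4 * l < x ^ 2 := fun l hl => by linarith [hl.2]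
  refine ⟨fun l hl => ⟨(hasDerivAt_objective (hbound l hl)).differentiableAt,
    hasDerivAt_deriv_objective (hbound l hl), neg_div_sqrt_cube_sub_four_neg hx (hbound l hl)⟩,
    tendsto_objective_nhdsGT_zero hx, ?_⟩
  exact (strictConcaveOn_objective hx).setOf_eq_zero_subsingleton (by positivity)
    (tendsto_objective_nhdsGT_zero hx)

theorem stmt4 (x Λ : ℝ) (hx : 0 < x) (hΛ : 0 < Λ) :
    let f : ℝ → ℝ := fun l => x ^ 4 + x ^ 3 * (Real.sqrt (x ^ 2 - 4 * l) - 2 * l)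
      + 2 * l * (Λ - l)
    (∀ l ∈ Set.Ioo 0 (x ^ 2 / 4),
        DifferentiableAt ℝ f l ∧
        HasDerivAt (deriv f) (-(4 * x ^ 3) / Real.sqrt ((x ^ 2 - 4 * l) ^ 3) - 4) l ∧
        -(4 * x ^ 3) / Real.sqrt ((x ^ 2 - 4 * l) ^ 3) - 4 < 0) ∧
      Filter.Tendsto f (nhdsWithin 0 (Set.Ioi 0)) (nhds (2 * x ^ 4)) ∧
      {l : ℝ | l ∈ Set.Ioc 0 (x ^ 2 / 4) ∧ f l = 0}.Subsingleton :=
  stmt4_general x Λ hx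
end

section
/- Let (λ_i)_{i∈ℤ₀} and (z_i)_{i∈ℤ₀} be positive reals with Σ_{l∈ℤ₀} λ_l z_l = S finite. Define D = 1 + λ₁²z₁² + 2S, x₀ = (1+S)/D, x₁ = (λ₁²z₁² + λ₁z₁)/D, and x_j = λ_j z_j / D for j ∈ ℤ₀, j ≠ 1. Then x₀ + Σ_{j∈ℤ₀} x_j = 1, and the vector (x_j)_{j∈ℤ} (with index 0 component x₀) satisfies the stationarity equations: x₀ = 1 − x₀·S/(1+S) − x₁·λ₁z₁/(1+λ₁z₁), x₁ = x₀·λ₁z₁/(1+S) + x₁·λ₁z₁/(1+λ₁z₁), and x_j = x₀·λ_j z_j/(1+S) for every j ∈ ℤ₀ with j ≠ 1. -/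
/-- The index set `ℤ₀ = ℤ \ {0}`. -/
abbrev Z0 : Type := {i : ℤ // i ≠ 0}

/-!
Write `w = λz`, `a = w₁`, `S = ∑ w`. Along the transitions `0 → j` and `1 → 1` the vector `x`
carries the flows `x₀ p₀ⱼ = wⱼ / D` and `x₁ p₁₁ = a² / D`, so each balance equation reduces to
the identity `D = 1 + a² + 2S`, as does the total mass `(1 + S) + (a² + a - a) + S`.
-/

theorem stationary_of_hasSum_weights {ι : Type*} [DecidableEq ι] {w : ι → ℝ} {S : ℝ}
    (hw : ∀ i, 0 ≤ w i) (hS : HasSum w S) (o : ι) :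
    let D := 1 + w o ^ 2 + 2 * S
    let x0 := (1 + S) / D
    let xv : ι → ℝ := fun j => if j = o then (w o ^ 2 + w o) / D else w j / D
    (x0 + ∑' j, xv j = 1) ∧
      x0 = 1 - x0 * S / (1 + S) - xv o * w o / (1 + w o) ∧
      xv o = x0 * w o / (1 + S) + xv o * w o / (1 + w o) ∧
      ∀ j, j ≠ o → xv j = x0 * w j / (1 + S) := by
  intro D x0 xv
  have hS0 : 0 ≤ S := hS.nonneg hw
  have ho := hw o
  have hD : 0 < D := by positivity
  have hflow0 : ∀ c, x0 * c / (1 + S) = c / D := fun c => by simp only [x0]; field_simp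
  have hflow1 : xv o * w o / (1 + w o) = w o ^ 2 / D := by simp only [xv, if_pos]; field_simp; ring
  have hxv : xv = Function.update (fun i => w i / D) o ((w o ^ 2 + w o) / D) :=
    funext fun j => (Function.update_apply (fun i => w i / D) o _ j).symm
  have hsum : HasSum xv ((w o ^ 2 + w o) / D - w o / D + S / D) :=
    hxv ▸ (hS.div_const D).update o _
  refine ⟨?_, ?_, ?_, fun j hj => ?_⟩
  · rw [hsum.tsum_eq]; simp only [x0]; field_simp; simp only [D]; ring
  · rw [hflow0, hflow1]; simp only [x0]; field_simp; simp only [D]; ring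
  · rw [hflow0, hflow1]; simp only [xv, if_pos]; ring
  · rw [hflow0]; simp only [xv, if_neg hj]

theorem stmt9 (lam z : Z0 → ℝ) (hlam : ∀ i, 0 < lam i) (hz : ∀ i, 0 < z i)
    (hS : Summable fun l => lam l * z l) :
    let S : ℝ := ∑' l, lam l * z l
    let o : Z0 := ⟨1, one_ne_zero⟩
    let D : ℝ := 1 + (lam o) ^ 2 * (z o) ^ 2 + 2 * S
    let x0 : ℝ := (1 + S) / D
    let xv : Z0 → ℝ := fun j =>
      if j = o then ((lam o) ^ 2 * (z o) ^ 2 + lam o * z o) / D else lam j * z j / D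
    (x0 + ∑' j, xv j = 1) ∧
      x0 = 1 - x0 * S / (1 + S) - xv o * (lam o * z o) / (1 + lam o * z o) ∧
      xv o = x0 * (lam o * z o) / (1 + S) + xv o * (lam o * z o) / (1 + lam o * z o) ∧
      ∀ j : Z0, j ≠ o → xv j = x0 * (lam j * z j) / (1 + S) := by
  simpa only [mul_pow] using
    stationary_of_hasSum_weights (fun l => (mul_pos (hlam l) (hz l)).le) hS.hasSum ⟨1, one_ne_zero⟩
end

section
/- Let k ≥ 1 be an integer and let (λ_i)_{i∈ℤ₀} be a family of positive reals. If (z_i)_{i∈ℤ₀} is a positive summable solution of the three-loop system of order k with sum A = Σ_{j∈ℤ₀} z_j, then the family (λ_i)_{i∈ℤ₀} is summable and Σ_{i∈ℤ₀} λ_i = A(1+A)^k − λ₁((1+z₁)^k − 1) − λ₂((1+z₂)^k − 1). -/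
/-- `(z_i)_{i∈ℤ₀}` is a positive summable solution of the three-loop system of order `k`
for the activities `(λ_i)_{i∈ℤ₀}`: all `z_i > 0`, `z` is summable with sum `A`, and
`z₁ = λ₁((1+z₁)/(1+A))^k`, `z₂ = λ₂((1+z₂)/(1+A))^k`, and
`z_i = λ_i (1/(1+A))^k` for `i ∉ {1,2}`. -/
def IsThreeLoopSolution (k : ℕ) (lam z : Z0 → ℝ) : Prop :=
  (∀ i, 0 < z i) ∧ Summable z ∧
    z ⟨1, one_ne_zero⟩ =
      lam ⟨1, one_ne_zero⟩ * ((1 + z ⟨1, one_ne_zero⟩) / (1 + ∑' j, z j)) ^ k ∧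
    z ⟨2, two_ne_zero⟩ =
      lam ⟨2, two_ne_zero⟩ * ((1 + z ⟨2, two_ne_zero⟩) / (1 + ∑' j, z j)) ^ k ∧
    ∀ i : Z0, (i : ℤ) ≠ 1 → (i : ℤ) ≠ 2 → z i = lam i * (1 / (1 + ∑' j, z j)) ^ k

/-! Multiplying each equation of the system by `(1 + A)^k` shows `λ_i = z_i (1 + A)^k` for
`i ∉ {1, 2}`, so `λ` differs from the summable family `z · (1 + A)^k`, of sum `A (1 + A)^k`, only
at `i = 1, 2`, where `λ_i (1 + z_i)^k = z_i (1 + A)^k`. -/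

theorem HasSum.of_eqOn_compl_finset {ι α : Type*} [AddCommGroup α] [TopologicalSpace α]
    [IsTopologicalAddGroup α] {f g : ι → α} {a : α} {s : Finset ι} (hg : HasSum g a)
    (hfg : ∀ i ∉ s, f i = g i) : HasSum f (a + ∑ i ∈ s, (f i - g i)) := by
  have hdiff : HasSum (f - g) (∑ i ∈ s, (f i - g i)) :=
    hasSum_sum_of_ne_finset_zero fun i hi => sub_eq_zero.mpr (hfg i hi)
  simpa using hg.add hdiff

theorem mul_pow_eq_of_eq_mul_div_pow {K : Type*} [Semifield K] {x c y d : K} (k : ℕ) (hd : d ≠ 0)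
    (h : x = c * (y / d) ^ k) : x * d ^ k = c * y ^ k := by
  rw [h, div_pow, mul_assoc, div_mul_cancel₀ _ (pow_ne_zero k hd)]

namespace IsThreeLoopSolution

variable {k : ℕ} {lam z : Z0 → ℝ}

theorem one_add_tsum_ne_zero (hsol : IsThreeLoopSolution k lam z) : 1 + ∑' j, z j ≠ 0 := by
  have : 0 ≤ ∑' j, z j := tsum_nonneg fun i => (hsol.1 i).le
  positivity

theorem mul_pow_eq_one (hsol : IsThreeLoopSolution k lam z) :
    z ⟨1, one_ne_zero⟩ * (1 + ∑' j, z j) ^ k =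
      lam ⟨1, one_ne_zero⟩ * (1 + z ⟨1, one_ne_zero⟩) ^ k :=
  mul_pow_eq_of_eq_mul_div_pow k hsol.one_add_tsum_ne_zero hsol.2.2.1

theorem mul_pow_eq_two (hsol : IsThreeLoopSolution k lam z) :
    z ⟨2, two_ne_zero⟩ * (1 + ∑' j, z j) ^ k =
      lam ⟨2, two_ne_zero⟩ * (1 + z ⟨2, two_ne_zero⟩) ^ k :=
  mul_pow_eq_of_eq_mul_div_pow k hsol.one_add_tsum_ne_zero hsol.2.2.2.1

theorem lam_eq_of_ne (hsol : IsThreeLoopSolution k lam z) {i : Z0} (h1 : (i : ℤ) ≠ 1)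
    (h2 : (i : ℤ) ≠ 2) : lam i = z i * (1 + ∑' j, z j) ^ k := by
  rw [mul_pow_eq_of_eq_mul_div_pow k hsol.one_add_tsum_ne_zero (hsol.2.2.2.2 i h1 h2),
    one_pow, mul_one]

theorem hasSum_lam (hsol : IsThreeLoopSolution k lam z) :
    HasSum lam ((∑' j, z j) * (1 + ∑' j, z j) ^ k
      + ∑ i ∈ {⟨1, one_ne_zero⟩, ⟨2, two_ne_zero⟩}, (lam i - z i * (1 + ∑' j, z j) ^ k)) := by
  refine (hsol.2.1.hasSum.mul_right _).of_eqOn_compl_finset fun i hi => ?_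
  simp only [Finset.mem_insert, Finset.mem_singleton, Subtype.ext_iff, not_or] at hi
  exact hsol.lam_eq_of_ne hi.1 hi.2

end IsThreeLoopSolution

theorem stmt10_general (k : ℕ) (lam z : Z0 → ℝ)
    (hsol : IsThreeLoopSolution k lam z) :
    Summable lam ∧
      ∑' i, lam i =
        (∑' j, z j) * (1 + ∑' j, z j) ^ k
          - lam ⟨1, one_ne_zero⟩ * ((1 + z ⟨1, one_ne_zero⟩) ^ k - 1)
          - lam ⟨2, two_ne_zero⟩ * ((1 + z ⟨2, two_ne_zero⟩) ^ k - 1) := by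
  refine ⟨hsol.hasSum_lam.summable, ?_⟩
  rw [hsol.hasSum_lam.tsum_eq, Finset.sum_pair (by simp [Subtype.ext_iff]),
    hsol.mul_pow_eq_one, hsol.mul_pow_eq_two]
  ring

theorem stmt10 (k : ℕ) (hk : 1 ≤ k) (lam z : Z0 → ℝ) (hlam : ∀ i, 0 < lam i)
    (hsol : IsThreeLoopSolution k lam z) :
    Summable lam ∧
      ∑' i, lam i =
        (∑' j, z j) * (1 + ∑' j, z j) ^ k
          - lam ⟨1, one_ne_zero⟩ * ((1 + z ⟨1, one_ne_zero⟩) ^ k - 1)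
          - lam ⟨2, two_ne_zero⟩ * ((1 + z ⟨2, two_ne_zero⟩) ^ k - 1) :=
  stmt10_general k lam z hsol
end

section
/- Let 0 < λ ≤ 49/9 and Λ > 0, and define q(x) = (1+x)⁴ − λ(x+2)(1+x)² + λΛ − 2λ² and Λ₁ = 8λ^{3/2} − 10λ. If Λ < Λ₁ then q has exactly one zero in the interval (2√λ − 1, ∞); if Λ ≥ Λ₁ then q has no zero in (2√λ − 1, ∞). -/
/-!
With `u = 1 + x` and `s = √λ`, the derivative of `q` is `u (4u² - 3s²u - 2s²)`, which is positive
for `u > 2s` as soon as `s ≤ 7/3`. So `q` is strictly increasing on `[2s - 1, ∞)`, where it starts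
at `q (2s - 1) = λ (Λ - Λ₁)` and tends to `+∞`: it has a (unique) zero there iff `Λ < Λ₁`.
-/

open Real Set Filter Polynomial

section

variable {α δ : Type*} [ConditionallyCompleteLinearOrder α] [TopologicalSpace α] [OrderTopology α]
  [DenselyOrdered α] [LinearOrder δ] [TopologicalSpace δ] [OrderClosedTopology δ]

theorem StrictMonoOn.existsUnique_eq_of_tendsto_atTop {f : α → δ} {a : α} {c : δ}
    (hmono : StrictMonoOn f (Ici a)) (hf : ContinuousOn f (Ici a))
    (htop : Tendsto f atTop atTop) (ha : f a < c) : ∃! x, x ∈ Ioi a ∧ f x = c := by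
  obtain ⟨x, hx, hfx⟩ := intermediate_value_Ioi hf htop ha
  refine ⟨x, ⟨hx, hfx⟩, fun y ⟨hy, hfy⟩ => ?_⟩
  exact hmono.injOn (mem_Ici_of_Ioi hy) (mem_Ici_of_Ioi hx) (hfy.trans hfx.symm)

end

def quartic (lam Λ x : ℝ) : ℝ :=
  (1 + x) ^ 4 - lam * (x + 2) * (1 + x) ^ 2 + lam * Λ - 2 * lam ^ 2

namespace quartic

variable {lam Λ : ℝ}

theorem continuous : Continuous (quartic lam Λ) := by
  unfold quartic; fun_prop

theorem hasDerivAt (x : ℝ) :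
    HasDerivAt (quartic lam Λ) ((1 + x) * (4 * (1 + x) ^ 2 - 3 * lam * (1 + x) - 2 * lam)) x := by
  have hu : HasDerivAt (fun x : ℝ => 1 + x) 1 x := (hasDerivAt_id x).const_add 1
  have hv := ((hasDerivAt_id x).add_const 2).const_mul lam
  have := (((hu.pow 4).sub (hv.mul (hu.pow 2))).add_const (lam * Λ)).sub_const (2 * lam ^ 2)
  exact this.congr_deriv (by simp only [id, Pi.pow_apply]; ring)

theorem tendsto_atTop : Tendsto (quartic lam Λ) atTop atTop := by
  let P : ℝ[X] := (X + 1) ^ 4 - C lam * (X + 2) * (X + 1) ^ 2 + C (lam * Λ - 2 * lam ^ 2)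
  have hP : P.eval = quartic lam Λ := by
    ext x
    simp only [P, quartic, eval_add, eval_sub, eval_mul, eval_pow, eval_X, eval_C, eval_one,
      eval_ofNat]
    ring
  have hdeg : P.natDegree = 4 := by simp only [P]; compute_degree!
  have hmonic : P.Monic := by simp only [P]; monicity!
  rw [← hP]
  refine P.tendsto_atTop_of_leadingCoeff_nonneg ?_ (by rw [hmonic.leadingCoeff]; exact zero_le_one)
  rw [degree_eq_natDegree hmonic.ne_zero, hdeg]
  norm_num

theorem eval_two_mul_sqrt_sub_one (h0 : 0 ≤ lam) :
    quartic lam Λ (2 * √lam - 1) = lam * (Λ - (8 * (lam * √lam) - 10 * lam)) := by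
  unfold quartic
  linear_combination (16 * √lam ^ 2 - 8 * lam * √lam + 12 * lam) * sq_sqrt h0

theorem deriv_pos (h0 : 0 ≤ lam) (h1 : lam ≤ 49 / 9) {x : ℝ} (hx : 2 * √lam - 1 < x) :
    0 < deriv (quartic lam Λ) x := by
  set s := √lam
  set u := 1 + x
  have hs0 : 0 ≤ s := sqrt_nonneg lam
  have hs7 : s ≤ 7 / 3 := sqrt_le_iff.mpr ⟨by norm_num, by linarith⟩
  have hu : 2 * s < u := by linarith
  -- the remainder `2s²(7 - 3s)` is where the bound `λ ≤ 49/9` enters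
  have hfactor : 4 * u ^ 2 - 3 * lam * u - 2 * lam
      = (u - 2 * s) * (4 * u + s * (8 - 3 * s)) + 2 * s ^ 2 * (7 - 3 * s) := by
    rw [← sq_sqrt h0]; ring
  have hlin : 0 < 4 * u + s * (8 - 3 * s) := by nlinarith
  have hrem : 0 ≤ 2 * s ^ 2 * (7 - 3 * s) := by nlinarith
  rw [(hasDerivAt x).deriv, hfactor]
  exact mul_pos (by linarith) (by nlinarith)

theorem strictMonoOn (h0 : 0 ≤ lam) (h1 : lam ≤ 49 / 9) :
    StrictMonoOn (quartic lam Λ) (Ici (2 * √lam - 1)) := by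
  refine strictMonoOn_of_deriv_pos (convex_Ici _) continuous.continuousOn fun x hx => ?_
  rw [interior_Ici] at hx
  exact deriv_pos h0 h1 hx

end quartic

theorem stmt14_general (lam Λ : ℝ) (h0 : 0 < lam) (h1 : lam ≤ 49 / 9) :
    let q : ℝ → ℝ := fun x => (1 + x) ^ 4 - lam * (x + 2) * (1 + x) ^ 2 + lam * Λ - 2 * lam ^ 2
    let Λ₁ : ℝ := 8 * (lam * Real.sqrt lam) - 10 * lam
    (Λ < Λ₁ → ∃! x : ℝ, x ∈ Set.Ioi (2 * Real.sqrt lam - 1) ∧ q x = 0) ∧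
      (Λ₁ ≤ Λ → ∀ x ∈ Set.Ioi (2 * Real.sqrt lam - 1), q x ≠ 0) := by
  intro q Λ₁
  change (Λ < Λ₁ → ∃! x, x ∈ Ioi (2 * √lam - 1) ∧ quartic lam Λ x = 0) ∧
    (Λ₁ ≤ Λ → ∀ x ∈ Ioi (2 * √lam - 1), quartic lam Λ x ≠ 0)
  have hmono := quartic.strictMonoOn (Λ := Λ) h0.le h1
  have hstart := quartic.eval_two_mul_sqrt_sub_one (Λ := Λ) h0.le
  refine ⟨fun hlt => ?_, fun hge x hx => ?_⟩
  · refine hmono.existsUnique_eq_of_tendsto_atTop quartic.continuous.continuousOn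
      quartic.tendsto_atTop ?_
    rw [hstart]
    exact mul_neg_of_pos_of_neg h0 (sub_neg.mpr hlt)
  · have hstart_nonneg : 0 ≤ quartic lam Λ (2 * √lam - 1) := by
      rw [hstart]
      exact mul_nonneg h0.le (sub_nonneg.mpr hge)
    exact (hstart_nonneg.trans_lt (hmono self_mem_Ici (mem_Ici_of_Ioi hx) hx)).ne'

theorem stmt14 (lam Λ : ℝ) (h0 : 0 < lam) (h1 : lam ≤ 49 / 9) (hΛ : 0 < Λ) :
    let q : ℝ → ℝ := fun x => (1 + x) ^ 4 - lam * (x + 2) * (1 + x) ^ 2 + lam * Λ - 2 * lam ^ 2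
    let Λ₁ : ℝ := 8 * (lam * Real.sqrt lam) - 10 * lam
    (Λ < Λ₁ → ∃! x : ℝ, x ∈ Set.Ioi (2 * Real.sqrt lam - 1) ∧ q x = 0) ∧
      (Λ₁ ≤ Λ → ∀ x ∈ Set.Ioi (2 * Real.sqrt lam - 1), q x ≠ 0) :=
  stmt14_general lam Λ h0 h1
end

section
/- Let λ > 49/9 and Λ be reals, define q(x) = (1+x)⁴ − λ(x+2)(1+x)² + λΛ − 2λ² and x₃ = (3λ − 8 + √(9λ² + 32λ))/8. Then x₃ > 2√λ − 1, q is strictly decreasing on (2√λ − 1, x₃) and strictly increasing on (x₃, ∞), and q(x₃) = −(λ/512)·((9λ² + 32λ)·√(9λ² + 32λ) + 27λ³ + 144λ² − 512Λ + 1152λ). -/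
/-!
The derivative of `q` is `(1 + x) (4x² + (8 - 3λ)x + 4 - 5λ)`, a cubic with roots
`-1`, `x₂` and `x₃`, where `x₂, x₃ = (3λ - 8 ∓ √(9λ² + 32λ)) / 8`. Both `-1` and `x₂` lie
to the left of `2√λ - 1`, so `q'` is negative on `(2√λ - 1, x₃)` and positive beyond `x₃`.
That `x₃` lies to the right of `2√λ - 1` amounts, with `t = √λ`, to
`9t⁴ + 32t² > (16t - 3t²)²`, i.e. `t > 7/3`: this is where `λ > 49/9` enters.
The value `q x₃` is a polynomial identity modulo `s² = 9λ² + 32λ`.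
-/

open Real Set

section CubicDerivative

variable {f : ℝ → ℝ} {k a b c p : ℝ}

theorem strictAntiOn_Ioo_of_hasDerivAt_cubic (hk : 0 < k) (ha : a ≤ p) (hb : b ≤ p)
    (hf : ∀ x, HasDerivAt f (k * (x - a) * (x - b) * (x - c)) x) :
    StrictAntiOn f (Ioo p c) := by
  have hcont : Continuous f := continuous_iff_continuousAt.2 fun x => (hf x).continuousAt
  refine strictAntiOn_of_deriv_neg (convex_Ioo p c) hcont.continuousOn fun x hx => ?_
  rw [interior_Ioo] at hx
  rw [(hf x).deriv]
  have hxa : 0 < x - a := by linarith [hx.1]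
  have hxb : 0 < x - b := by linarith [hx.1]
  exact mul_neg_of_pos_of_neg (by positivity) (by linarith [hx.2])

theorem strictMonoOn_Ioi_of_hasDerivAt_cubic (hk : 0 < k) (ha : a ≤ p) (hb : b ≤ p)
    (hpc : p < c) (hf : ∀ x, HasDerivAt f (k * (x - a) * (x - b) * (x - c)) x) :
    StrictMonoOn f (Ioi c) := by
  have hcont : Continuous f := continuous_iff_continuousAt.2 fun x => (hf x).continuousAt
  refine strictMonoOn_of_deriv_pos (convex_Ioi c) hcont.continuousOn fun x hx => ?_
  rw [interior_Ioi] at hx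
  rw [(hf x).deriv]
  have hxa : 0 < x - a := by linarith [mem_Ioi.1 hx]
  have hxb : 0 < x - b := by linarith [mem_Ioi.1 hx]
  have hxc : 0 < x - c := sub_pos.2 hx
  positivity

end CubicDerivative

section Quartic

variable (lam Λ : ℝ)

theorem hasDerivAt_quartic (x : ℝ) :
    HasDerivAt (fun x : ℝ => (1 + x) ^ 4 - lam * (x + 2) * (1 + x) ^ 2 + lam * Λ - 2 * lam ^ 2)
      ((1 + x) * (4 * x ^ 2 + (8 - 3 * lam) * x + (4 - 5 * lam))) x := by
  have hone : HasDerivAt (fun x : ℝ => 1 + x) 1 x := (hasDerivAt_id x).const_add 1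
  have htwo : HasDerivAt (fun x : ℝ => x + 2) 1 x := (hasDerivAt_id x).add_const 2
  refine (((hone.pow 4).sub ((htwo.const_mul lam).mul (hone.pow 2))).add_const (lam * Λ)
    |>.sub_const (2 * lam ^ 2)).congr_deriv ?_
  simp only [Pi.pow_apply]
  ring

theorem two_sqrt_sub_one_lt_larger_root (h : 49 / 9 < lam) :
    2 * √lam - 1 < (3 * lam - 8 + √(9 * lam ^ 2 + 32 * lam)) / 8 := by
  have hlam : 0 < lam := by linarith
  have ht : √lam ^ 2 = lam := sq_sqrt hlam.le
  have ht_pos : 0 < √lam := sqrt_pos.2 hlam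
  have ht_gt : 7 / 3 < √lam := by nlinarith
  have hs : √(9 * lam ^ 2 + 32 * lam) ^ 2 = 9 * lam ^ 2 + 32 * lam := sq_sqrt (by positivity)
  have hs_pos := sqrt_nonneg (9 * lam ^ 2 + 32 * lam)
  -- `s² - (16t - 3t²)² = 32t²(3t - 7)`
  nlinarith [sq_nonneg (√(9 * lam ^ 2 + 32 * lam) - (16 * √lam - 3 * √lam ^ 2)),
    mul_pos ht_pos ht_pos]

theorem smaller_root_le_two_sqrt_sub_one (h : 0 ≤ lam) :
    (3 * lam - 8 - √(9 * lam ^ 2 + 32 * lam)) / 8 ≤ 2 * √lam - 1 := by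
  have hs : 3 * lam ≤ √(9 * lam ^ 2 + 32 * lam) :=
    le_sqrt_of_sq_le (by nlinarith)
  linarith [sqrt_nonneg lam]

end Quartic

theorem stmt15 (lam Λ : ℝ) (h0 : 49 / 9 < lam) :
    let q : ℝ → ℝ := fun x => (1 + x) ^ 4 - lam * (x + 2) * (1 + x) ^ 2 + lam * Λ - 2 * lam ^ 2
    let x₃ : ℝ := (3 * lam - 8 + Real.sqrt (9 * lam ^ 2 + 32 * lam)) / 8
    2 * Real.sqrt lam - 1 < x₃ ∧
      StrictAntiOn q (Set.Ioo (2 * Real.sqrt lam - 1) x₃) ∧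
      StrictMonoOn q (Set.Ioi x₃) ∧
      q x₃ = -(lam / 512) * ((9 * lam ^ 2 + 32 * lam) * Real.sqrt (9 * lam ^ 2 + 32 * lam)
        + 27 * lam ^ 3 + 144 * lam ^ 2 - 512 * Λ + 1152 * lam) := by
  intro q x₃
  have hlam : 0 ≤ lam := by linarith
  set s := √(9 * lam ^ 2 + 32 * lam)
  have hs : s ^ 2 = 9 * lam ^ 2 + 32 * lam := sq_sqrt (by positivity)
  have hx₃ : 2 * √lam - 1 < x₃ := two_sqrt_sub_one_lt_larger_root lam h0
  have hx₂ := smaller_root_le_two_sqrt_sub_one lam hlam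
  have hminus : -1 ≤ 2 * √lam - 1 := by linarith [sqrt_nonneg lam]
  have hq' (x : ℝ) :
      HasDerivAt q (4 * (x - -1) * (x - (3 * lam - 8 - s) / 8) * (x - x₃)) x :=
    (hasDerivAt_quartic lam Λ x).congr_deriv (by linear_combination (1 + x) / 16 * hs)
  refine ⟨hx₃, strictAntiOn_Ioo_of_hasDerivAt_cubic four_pos hminus hx₂ hq',
    strictMonoOn_Ioi_of_hasDerivAt_cubic four_pos hminus hx₂ hx₃ hq', ?_⟩
  show (1 + x₃) ^ 4 - lam * (x₃ + 2) * (1 + x₃) ^ 2 + lam * Λ - 2 * lam ^ 2 = _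
  linear_combination (s ^ 2 / 4096 + lam * s / 1024 - 9 * lam ^ 2 / 4096 - lam / 128) * hs
end
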